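/- Let 0 < c < τ* and let δ*(y) = exp(2cy)/(exp(2cy)+1). Then the worst-case mean square regret of δ* over the parameter space [−c,c] is attained at the endpoints: sup_{τ∈[−c,c]} R(δ*,τ) = c² ρ(c). -/

import Mathlib

open Real MeasureTheory

/-- The standard normal density. -/
noncomputable def gaussPdf (x : ℝ) : ℝ :=
  (Real.sqrt (2 * Real.pi))⁻¹ * Real.exp (-(x ^ 2) / 2)

/-- ρ(a) = ∫ (1/(exp(2ay)+1))² φ(y−a) dy. -/
noncomputable def ρ (a : ℝ) : ℝ :=
  ∫ y : ℝ, (1 / (Real.exp (2 * a * y) + 1)) ^ 2 * gaussPdf (y - a)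

/-- Mean square regret of a rule δ at parameter τ in the one-dimensional Gaussian
problem with unit variance. -/
noncomputable def R (δ : ℝ → ℝ) (τ : ℝ) : ℝ :=
  τ ^ 2 * ∫ y : ℝ, ((if 0 ≤ τ then (1 : ℝ) else 0) - δ y) ^ 2 * gaussPdf (y - τ)

/-!
For `τ ∈ [-c, c]` the regret is `R(δ*, τ) = τ² r(c, |τ|)`, where `r(c, t)` is the squared risk of
the logistic rule with slope `2c` at the parameter `t > 0`; in particular `ρ(a) = r(a, a)`.
Tilting the Gaussian by `exp (-2cy)` writes `r(c, t)` as `exp (2c² - 2ct) / 4` times the Gaussian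
smoothing of `sech² (c ·)` at `t - 2c`. Since `sech²` is log-concave, so is its Gaussian smoothing,
and therefore `s ↦ s² r(c, s)` is log-concave on `(0, ∞)`. Bayes optimality of the logistic rule
at `τ*` gives `c² r(c, c) = c² ρ(c) ≤ τ*² ρ(τ*) ≤ τ*² r(c, τ*)`, and a log-concave function that
does not decrease from `c` to `τ* > c` does not decrease on `(0, c]` either.
-/

open Set
open scoped Convolution

lemma nonneg_of_midpoint_concave {g : ℝ → ℝ} (hg : Continuous g) (h0 : g 0 = 0) (h1 : g 1 = 0)
    (hmid : ∀ a b, (g a + g b) / 2 ≤ g ((a + b) / 2)) {l : ℝ} (hl : l ∈ Icc (0 : ℝ) 1) :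
    0 ≤ g l := by
  by_contra! hneg
  obtain ⟨l₁, hl₁, hmin⟩ := isCompact_Icc.exists_isMinOn ⟨l, hl⟩ hg.continuousOn
  -- midpoint concavity fails at `m ± h`, where `m` is the leftmost minimiser of `g` on `[0, 1]`
  set S := Icc (0 : ℝ) 1 ∩ g ⁻¹' {g l₁}
  have hS : IsClosed S := isClosed_Icc.inter (isClosed_singleton.preimage hg)
  have hSb : BddBelow S := bddBelow_Icc.mono inter_subset_left
  obtain ⟨hm, hgm⟩ := hS.csInf_mem ⟨l₁, hl₁, rfl⟩ hSb
  set m := sInf S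
  have hgl₁ : g l₁ < 0 := (hmin hl).trans_lt hneg
  have hm0 : m ≠ 0 := fun h => by simp_all
  have hm1 : m ≠ 1 := fun h => by simp_all
  set h := min m (1 - m)
  have hh : 0 < h := lt_min (hm.1.lt_of_ne' hm0) (sub_pos.2 (hm.2.lt_of_ne hm1))
  have hleft : m - h ∈ Icc (0 : ℝ) 1 := ⟨by linarith [min_le_left m (1 - m)], by linarith [hm.2]⟩
  have hright : m + h ∈ Icc (0 : ℝ) 1 := ⟨by linarith [hm.1], by linarith [min_le_right m (1 - m)]⟩
  have hlt : g l₁ < g (m - h) := by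
    refine (hmin hleft).lt_of_ne fun heq => ?_
    have := csInf_le hSb ⟨hleft, heq.symm⟩
    linarith
  have := hmid (m - h) (m + h)
  rw [show (m - h + (m + h)) / 2 = m by ring, hgm] at this
  have hr : g l₁ ≤ g (m + h) := hmin hright
  linarith

theorem concaveOn_univ_of_midpoint {f : ℝ → ℝ} (hf : Continuous f)
    (hmid : ∀ x y, (f x + f y) / 2 ≤ f ((x + y) / 2)) : ConcaveOn ℝ univ f := by
  refine ⟨convex_univ, fun x _ y _ a b ha hb hab => ?_⟩
  set g : ℝ → ℝ := fun l => f (l * x + (1 - l) * y) - (l * f x + (1 - l) * f y)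
  have hg : Continuous g := by fun_prop
  have hgmid : ∀ p q, (g p + g q) / 2 ≤ g ((p + q) / 2) := fun p q => by
    have := hmid (p * x + (1 - p) * y) (q * x + (1 - q) * y)
    simp only [g]
    rw [show (p + q) / 2 * x + (1 - (p + q) / 2) * y
      = (p * x + (1 - p) * y + (q * x + (1 - q) * y)) / 2 by ring]
    linarith
  have := nonneg_of_midpoint_concave hg (by simp [g]) (by simp [g]) hgmid
    (l := a) ⟨ha, by linarith⟩
  simp only [g, smul_eq_mul, show 1 - a = b by linarith] at this ⊢
  linarith

def SymmDecreasing (f : ℝ → ℝ) : Prop := ∀ u v, |u| ≤ |v| → f v ≤ f u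

lemma SymmDecreasing.apply_neg {f : ℝ → ℝ} (hf : SymmDecreasing f) (v : ℝ) : f (-v) = f v :=
  le_antisymm (hf _ _ (abs_neg v).ge) (hf _ _ (abs_neg v).le)

lemma integral_le_of_add_comp_neg_le {f g : ℝ → ℝ} (hf : Integrable f) (hg : Integrable g)
    (h : ∀ y, f y + f (-y) ≤ g y + g (-y)) : ∫ y, f y ≤ ∫ y, g y := by
  have : ∫ y, (f y + f (-y)) ≤ ∫ y, (g y + g (-y)) :=
    integral_mono (hf.add hf.comp_neg) (hg.add hg.comp_neg) h
  rw [integral_add hf hf.comp_neg, integral_add hg hg.comp_neg, integral_neg_eq_self,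
    integral_neg_eq_self] at this
  linarith

theorem integral_mul_comp_sub_le {f g : ℝ → ℝ} (hf : SymmDecreasing f) (hg : SymmDecreasing g)
    (γ : ℝ) (hfg : Integrable fun v => f v * g v)
    (hfgγ : Integrable fun v => f v * g (v - γ)) :
    ∫ v, f v * g (v - γ) ≤ ∫ v, f v * g v := by
  have hswap : (fun v => f (v - γ) * g v) = fun v => f (γ - v) * g (γ - v - γ) := by
    ext v
    rw [show γ - v - γ = -v by ring, hg.apply_neg, ← neg_sub, hf.apply_neg]
  have hint : Integrable fun v => f (v - γ) * g v := hswap ▸ hfgγ.comp_sub_left γ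
  have hint' : Integrable fun v => f (v - γ) * g (v - γ) := hfg.comp_sub_right γ
  -- rearrangement: `f` and `g` are both larger at whichever of `v`, `v - γ` is closer to `0`
  have hpt : ∀ v, f v * g (v - γ) + f (v - γ) * g v ≤ f v * g v + f (v - γ) * g (v - γ) := by
    intro v
    rcases le_total |v| |v - γ| with h | h
    · nlinarith [hf _ _ h, hg _ _ h]
    · nlinarith [hf _ _ h, hg _ _ h]
  have : ∫ v, (f v * g (v - γ) + f (v - γ) * g v) ≤ ∫ v, (f v * g v + f (v - γ) * g (v - γ)) :=
    integral_mono (hfgγ.add hint) (hfg.add hint') hpt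
  rw [integral_add hfgγ hint, integral_add hfg hint', hswap,
    integral_sub_left_eq_self (fun v => f v * g (v - γ)),
    integral_sub_right_eq_self (fun v => f v * g v)] at this
  linarith

lemma symmDecreasing_exp_neg_sq : SymmDecreasing fun v => exp (-v ^ 2) :=
  fun _ _ h => exp_le_exp.2 (neg_le_neg (sq_le_sq.2 h))

lemma gaussPdf_sub (x t : ℝ) : gaussPdf (x - t) = ProbabilityTheory.gaussianPDFReal t 1 x := by
  simp [gaussPdf, ProbabilityTheory.gaussianPDFReal]

lemma gaussPdf_pos (x : ℝ) : 0 < gaussPdf x := by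
  unfold gaussPdf; positivity

lemma gaussPdf_neg (x : ℝ) : gaussPdf (-x) = gaussPdf x := by
  simp [gaussPdf]

lemma integrable_gaussPdf_sub (t : ℝ) : Integrable fun x => gaussPdf (x - t) := by
  simpa only [gaussPdf_sub] using ProbabilityTheory.integrable_gaussianPDFReal t 1

lemma exp_mul_gaussPdf_sub (k t y : ℝ) :
    exp (k * y) * gaussPdf (y - t) = exp (k * t + k ^ 2 / 2) * gaussPdf (y - (t + k)) := by
  simp only [gaussPdf, mul_left_comm (exp _), ← exp_add]
  ring_nf

lemma gaussPdf_sub_mul_gaussPdf_sub (a b t x : ℝ) :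
    gaussPdf (x - a) * gaussPdf (t - x - b)
      = (2 * π)⁻¹ * exp (-((t - a - b) ^ 2 / 4)) * exp (-((x - t / 2 - (a - b) / 2) ^ 2)) := by
  have hsq : (√(2 * π))⁻¹ * (√(2 * π))⁻¹ = (2 * π)⁻¹ := by
    rw [← mul_inv, mul_self_sqrt (by positivity)]
  rw [gaussPdf, gaussPdf, mul_mul_mul_comm, hsq, mul_assoc, ← exp_add, ← exp_add]
  ring_nf

lemma integrable_mul_gaussPdf_sub {h : ℝ → ℝ} {C : ℝ} (hh : Continuous h)
    (hC : ∀ y, |h y| ≤ C) (t : ℝ) : Integrable fun y => h y * gaussPdf (y - t) :=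
  (integrable_gaussPdf_sub t).bdd_mul hh.aestronglyMeasurable (ae_of_all _ hC)

noncomputable def gaussSmooth (K : ℝ → ℝ) (s : ℝ) : ℝ := ∫ y, K y * gaussPdf (y - s)

section GaussSmooth

variable {K : ℝ → ℝ} {C : ℝ}

lemma gaussSmooth_eq_convolution : gaussSmooth K = K ⋆ gaussPdf := by
  ext s
  rw [gaussSmooth, convolution_lsmul]
  simp_rw [smul_eq_mul, ← gaussPdf_neg (_ - s), neg_sub]

lemma continuous_gaussSmooth (hK : Continuous K) (hKC : ∀ y, |K y| ≤ C) :
    Continuous (gaussSmooth K) := by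
  rw [gaussSmooth_eq_convolution]
  refine BddAbove.continuous_convolution_left_of_integrable _ ⟨C, ?_⟩ hK
    (by simpa using integrable_gaussPdf_sub 0)
  rintro _ ⟨y, rfl⟩
  exact hKC y

lemma gaussSmooth_pos (hK : Continuous K) (hKC : ∀ y, |K y| ≤ C) (hKpos : ∀ y, 0 < K y)
    (s : ℝ) : 0 < gaussSmooth K s := by
  have hpos : ∀ y, 0 < K y * gaussPdf (y - s) := fun y => mul_pos (hKpos y) (gaussPdf_pos _)
  rw [gaussSmooth, integral_pos_iff_support_of_nonneg (fun y => (hpos y).le)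
    (integrable_mul_gaussPdf_sub hK hKC s), Function.support_eq_univ fun y => (hpos y).ne']
  simp

lemma convolution_mul_gaussPdf_sub (a b t : ℝ) :
    ((fun x => K x * gaussPdf (x - a)) ⋆ (fun x => K x * gaussPdf (x - b))) t
      = (2 * π)⁻¹ * exp (-((t - a - b) ^ 2 / 4))
        * ∫ v, K (t / 2 + v) * K (t / 2 - v) * exp (-((v - (a - b) / 2) ^ 2)) := by
  rw [convolution_lsmul, ← integral_const_mul,
    ← integral_add_right_eq_self _ (t / 2)]
  congr 1 with v
  rw [smul_eq_mul, mul_mul_mul_comm, gaussPdf_sub_mul_gaussPdf_sub]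
  ring_nf

lemma convolution_mul_gaussPdf_sub_le (hK : Continuous K) (hKC : ∀ y, |K y| ≤ C)
    (hpair : ∀ m, SymmDecreasing fun v => K (m + v) * K (m - v)) (a b t : ℝ) :
    ((fun x => K x * gaussPdf (x - a)) ⋆ (fun x => K x * gaussPdf (x - b))) t
      ≤ ((fun x => K x * gaussPdf (x - (a + b) / 2))
          ⋆ (fun x => K x * gaussPdf (x - (a + b) / 2))) t := by
  have hC : 0 ≤ C := (abs_nonneg _).trans (hKC 0)
  have hP : Continuous fun v => K (t / 2 + v) * K (t / 2 - v) := by fun_prop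
  have hPC : ∀ v, ‖K (t / 2 + v) * K (t / 2 - v)‖ ≤ C * C := fun v => by
    rw [norm_mul]; exact mul_le_mul (hKC _) (hKC _) (norm_nonneg _) hC
  have hint : ∀ γ : ℝ,
      Integrable fun v => K (t / 2 + v) * K (t / 2 - v) * exp (-(v - γ) ^ 2) := fun γ =>
    ((integrable_exp_neg_mul_sq one_pos).comp_sub_right γ).bdd_mul hP.aestronglyMeasurable
      (ae_of_all _ hPC) |>.congr (ae_of_all _ fun v => by simp)
  have := integral_mul_comp_sub_le (hpair (t / 2)) symmDecreasing_exp_neg_sq ((a - b) / 2)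
    (by simpa using hint 0) (hint _)
  simp only [convolution_mul_gaussPdf_sub, sub_self, zero_div, sub_zero,
    show t - (a + b) / 2 - (a + b) / 2 = t - a - b by ring]
  gcongr

lemma gaussSmooth_mul_le_sq (hK : Continuous K) (hKC : ∀ y, |K y| ≤ C)
    (hpair : ∀ m, SymmDecreasing fun v => K (m + v) * K (m - v)) (a b : ℝ) :
    gaussSmooth K a * gaussSmooth K b ≤ gaussSmooth K ((a + b) / 2) ^ 2 := by
  have hint := integrable_mul_gaussPdf_sub hK hKC
  have hconv : ∀ a b, gaussSmooth K a * gaussSmooth K b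
      = ∫ t, ((fun x => K x * gaussPdf (x - a)) ⋆ (fun x => K x * gaussPdf (x - b))) t :=
    fun a b => (integral_convolution (ContinuousLinearMap.lsmul ℝ ℝ) (hint a) (hint b)).symm
  rw [sq, hconv, hconv]
  exact integral_mono ((hint a).integrable_convolution _ (hint b))
    ((hint _).integrable_convolution _ (hint _)) (convolution_mul_gaussPdf_sub_le hK hKC hpair a b)

-- For positive `K`, the condition `hpair` is the log-concavity of `K`.
theorem concaveOn_log_gaussSmooth (hK : Continuous K) (hKC : ∀ y, |K y| ≤ C)
    (hKpos : ∀ y, 0 < K y) (hpair : ∀ m, SymmDecreasing fun v => K (m + v) * K (m - v)) :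
    ConcaveOn ℝ univ fun s => log (gaussSmooth K s) := by
  have hpos := gaussSmooth_pos hK hKC hKpos
  refine concaveOn_univ_of_midpoint
    ((continuous_gaussSmooth hK hKC).log fun s => (hpos s).ne') fun a b => ?_
  have := log_le_log (mul_pos (hpos a) (hpos b)) (gaussSmooth_mul_le_sq hK hKC hpair a b)
  rw [log_mul (hpos a).ne' (hpos b).ne', log_pow] at this
  push_cast at this
  linarith

end GaussSmooth

lemma cosh_add_mul_cosh_sub (x y : ℝ) : cosh (x + y) * cosh (x - y) = cosh x ^ 2 + sinh y ^ 2 := by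
  rw [cosh_add, cosh_sub]
  linear_combination cosh x ^ 2 * cosh_sq y + sinh y ^ 2 * cosh_sq x

noncomputable def sechSq (c y : ℝ) : ℝ := (cosh (c * y) ^ 2)⁻¹

lemma sechSq_pos (c y : ℝ) : 0 < sechSq c y := by
  unfold sechSq; positivity

lemma abs_sechSq_le_one (c y : ℝ) : |sechSq c y| ≤ 1 := by
  rw [abs_of_pos (sechSq_pos c y), sechSq]
  exact inv_le_one_of_one_le₀ (one_le_pow₀ (one_le_cosh _))

lemma continuous_sechSq (c : ℝ) : Continuous (sechSq c) :=
  (by fun_prop : Continuous fun y => cosh (c * y) ^ 2).inv₀ fun y => by positivity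

lemma symmDecreasing_sechSq_mul (c m : ℝ) :
    SymmDecreasing fun v => sechSq c (m + v) * sechSq c (m - v) := by
  intro u v huv
  have hsinh : sinh (c * u) ^ 2 ≤ sinh (c * v) ^ 2 := by
    have : cosh (c * u) ≤ cosh (c * v) := by
      rw [cosh_le_cosh, abs_mul, abs_mul]
      exact mul_le_mul_of_nonneg_left huv (abs_nonneg c)
    have := pow_le_pow_left₀ (cosh_pos _).le this 2
    linarith [cosh_sq (c * u), cosh_sq (c * v)]
  simp only [sechSq, ← mul_inv, ← mul_pow, mul_add, mul_sub, cosh_add_mul_cosh_sub]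
  gcongr

noncomputable def logisticRisk (c t : ℝ) : ℝ :=
  ∫ y, (1 / (exp (2 * c * y) + 1)) ^ 2 * gaussPdf (y - t)

lemma ρ_eq_logisticRisk (a : ℝ) : ρ a = logisticRisk a a := rfl

lemma abs_one_div_exp_add_one_sq_le (x : ℝ) : |(1 / (exp x + 1)) ^ 2| ≤ 1 := by
  rw [abs_of_nonneg (by positivity)]
  exact pow_le_one₀ (by positivity) (div_le_one_of_le₀ (by linarith [exp_pos x]) (by positivity))

lemma integrable_logisticRisk (c t : ℝ) :
    Integrable fun y => (1 / (exp (2 * c * y) + 1)) ^ 2 * gaussPdf (y - t) :=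
  integrable_mul_gaussPdf_sub (by fun_prop (disch := intro; positivity))
    (fun y => abs_one_div_exp_add_one_sq_le _) t

lemma logisticRisk_eq_gaussSmooth (c t : ℝ) :
    logisticRisk c t = exp (2 * c ^ 2 - 2 * c * t) / 4 * gaussSmooth (sechSq c) (t - 2 * c) := by
  rw [logisticRisk, gaussSmooth, ← integral_const_mul]
  congr 1 with y
  have hlogistic : (1 / (exp (2 * c * y) + 1)) ^ 2 = sechSq c y / 4 * exp (-2 * c * y) := by
    have hexp : exp (2 * c * y) = exp (c * y) ^ 2 := by rw [← exp_nat_mul]; ring_nf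
    rw [sechSq, cosh_eq, hexp, neg_mul, neg_mul, exp_neg, exp_neg, hexp]
    field_simp
    ring
  rw [hlogistic, mul_assoc, exp_mul_gaussPdf_sub]
  ring_nf

lemma logisticRisk_pos (c t : ℝ) : 0 < logisticRisk c t := by
  rw [logisticRisk_eq_gaussSmooth]
  exact mul_pos (by positivity)
    (gaussSmooth_pos (continuous_sechSq c) (abs_sechSq_le_one c) (sechSq_pos c) _)

theorem concaveOn_log_sq_mul_logisticRisk (c : ℝ) :
    ConcaveOn ℝ (Ioi 0) fun s => log (s ^ 2 * logisticRisk c s) := by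
  have hlog : ConcaveOn ℝ (Ioi 0) fun s : ℝ => (2 : ℝ) • log s :=
    strictConcaveOn_log_Ioi.concaveOn.smul zero_le_two
  have hsmooth : ConcaveOn ℝ (Ioi 0) fun s => log (gaussSmooth (sechSq c) (s - 2 * c)) := by
    have := (concaveOn_log_gaussSmooth (continuous_sechSq c) (abs_sechSq_le_one c)
      (sechSq_pos c) (symmDecreasing_sechSq_mul c)).translate_left (-(2 * c))
    exact this.subset (subset_univ _) (convex_Ioi 0)
  have hlin : ConcaveOn ℝ (Ioi 0) fun s : ℝ => 2 * c ^ 2 - 2 * c * s - log 4 :=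
    ⟨convex_Ioi 0, fun x _ y _ a b _ _ hab => by
      simp only [smul_eq_mul]
      linear_combination (2 * c ^ 2 - log 4) * hab⟩
  refine ((hlog.add hsmooth).add hlin).congr fun s (hs : 0 < s) => ?_
  have hw := gaussSmooth_pos (continuous_sechSq c) (abs_sechSq_le_one c) (sechSq_pos c) (s - 2 * c)
  rw [logisticRisk_eq_gaussSmooth, log_mul (by positivity) (by positivity),
    log_mul (by positivity) hw.ne', log_div (exp_pos _).ne' four_ne_zero, log_exp, log_pow]
  simp only [smul_eq_mul, Pi.add_apply]
  push_cast
  ring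

lemma sq_mul_logisticRisk_le {c s t τ : ℝ} (ht : 0 < t) (hts : t ≤ s) (hsτ : s < τ)
    (h : s ^ 2 * logisticRisk c s ≤ τ ^ 2 * logisticRisk c τ) :
    t ^ 2 * logisticRisk c t ≤ s ^ 2 * logisticRisk c s := by
  have hpos : ∀ x : ℝ, 0 < x → 0 < x ^ 2 * logisticRisk c x :=
    fun x hx => mul_pos (by positivity) (logisticRisk_pos c x)
  have hs := ht.trans_le hts
  refine (log_le_log_iff (hpos t ht) (hpos s hs)).1 ?_
  exact (concaveOn_log_sq_mul_logisticRisk c).left_le_of_le_right'' ht (hs.trans hsτ) hts hsτ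
    (log_le_log (hpos s hs) h)

lemma bayes_risk_le {s u : ℝ} (hs : 0 < s) (hu : 0 < u) :
    s * (1 / (s + 1)) ^ 2 + (1 / (s⁻¹ + 1)) ^ 2 ≤ s * (1 / (u + 1)) ^ 2 + (1 / (u⁻¹ + 1)) ^ 2 := by
  have hs' : s * (1 / (s + 1)) ^ 2 + (1 / (s⁻¹ + 1)) ^ 2 = s / (s + 1) := by
    field_simp; ring
  have hu' : s * (1 / (u + 1)) ^ 2 + (1 / (u⁻¹ + 1)) ^ 2 = (s + u ^ 2) / (u + 1) ^ 2 := by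
    field_simp
    ring
  rw [hs', hu', div_le_div_iff₀ (by positivity) (by positivity)]
  nlinarith [sq_nonneg (u - s)]

lemma logistic_add_comp_neg (c a y : ℝ) :
    (1 / (exp (2 * c * y) + 1)) ^ 2 * gaussPdf (y - a)
        + (1 / (exp (2 * c * -y) + 1)) ^ 2 * gaussPdf (-y - a)
      = (exp (2 * a * y) * (1 / (exp (2 * c * y) + 1)) ^ 2
          + (1 / ((exp (2 * c * y))⁻¹ + 1)) ^ 2) * gaussPdf (y + a) := by
  have hφ : gaussPdf (y - a) = exp (2 * a * y) * gaussPdf (y + a) := by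
    rw [← sub_neg_eq_add, exp_mul_gaussPdf_sub]
    ring_nf
    rw [exp_zero, one_mul]
  rw [hφ, show -y - a = -(y + a) by ring, gaussPdf_neg, mul_neg, exp_neg]
  ring

lemma ρ_le_logisticRisk (a c : ℝ) : ρ a ≤ logisticRisk c a := by
  refine integral_le_of_add_comp_neg_le (integrable_logisticRisk a a)
    (integrable_logisticRisk c a) fun y => ?_
  rw [logistic_add_comp_neg, logistic_add_comp_neg]
  exact mul_le_mul_of_nonneg_right (bayes_risk_le (exp_pos _) (exp_pos _)) (gaussPdf_pos _).le

lemma R_eq_sq_mul_logisticRisk {c : ℝ} {δ : ℝ → ℝ}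
    (hδ : ∀ y, δ y = exp (2 * c * y) / (exp (2 * c * y) + 1)) (τ : ℝ) :
    R δ τ = τ ^ 2 * logisticRisk c |τ| := by
  rw [R, logisticRisk]
  congr 1
  rcases le_or_gt 0 τ with hτ | hτ
  · simp only [if_pos hτ, abs_of_nonneg hτ, hδ]
    congr 1 with y
    field_simp
    ring
  · simp only [if_neg hτ.not_ge, abs_of_neg hτ, hδ]
    rw [← integral_neg_eq_self]
    congr 1 with y
    rw [show -y - τ = -(y - -τ) by ring, gaussPdf_neg, mul_neg, exp_neg]
    field_simp
    ring

theorem stmt_3_general (τstar c : ℝ)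
    (hτmax : ∀ τ : ℝ, 0 ≤ τ → τ ^ 2 * ρ τ ≤ τstar ^ 2 * ρ τstar)
    (hc0 : 0 < c) (hc : c < τstar)
    (δstar : ℝ → ℝ)
    (hδstar : ∀ y, δstar y = Real.exp (2 * c * y) / (Real.exp (2 * c * y) + 1)) :
    (⨆ τ : Set.Icc (-c) c, R δstar τ) = c ^ 2 * ρ c := by
  have hendpoint : c ^ 2 * logisticRisk c c ≤ τstar ^ 2 * logisticRisk c τstar :=
    calc c ^ 2 * logisticRisk c c = c ^ 2 * ρ c := by rw [ρ_eq_logisticRisk]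
      _ ≤ τstar ^ 2 * ρ τstar := hτmax c hc0.le
      _ ≤ τstar ^ 2 * logisticRisk c τstar := by gcongr; exact ρ_le_logisticRisk τstar c
  have hle : ∀ τ : Set.Icc (-c) c, R δstar τ ≤ c ^ 2 * ρ c := fun ⟨τ, hτ⟩ => by
    rw [R_eq_sq_mul_logisticRisk hδstar, ← sq_abs]
    rcases (abs_nonneg τ).eq_or_lt with h0 | hpos
    · rw [← h0]
      simpa [ρ_eq_logisticRisk] using (mul_pos (pow_pos hc0 2) (logisticRisk_pos c c)).le
    · rw [ρ_eq_logisticRisk]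
      exact sq_mul_logisticRisk_le hpos (abs_le.2 hτ) hc hendpoint
  have hmem : c ∈ Set.Icc (-c) c := ⟨by linarith, le_rfl⟩
  have hattained : R δstar c = c ^ 2 * ρ c := by
    rw [R_eq_sq_mul_logisticRisk hδstar, abs_of_pos hc0, ρ_eq_logisticRisk]
  have : Nonempty (Set.Icc (-c) c) := ⟨⟨c, hmem⟩⟩
  exact le_antisymm (ciSup_le hle)
    (hattained ▸ le_ciSup (f := fun τ : Set.Icc (-c) c => R δstar τ)
      ⟨_, forall_mem_range.2 hle⟩ ⟨c, hmem⟩)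

/-- For 0 < c < τ*, the worst-case mean square regret of δ*(y) = exp(2cy)/(exp(2cy)+1)
over [−c,c] equals c²ρ(c). -/
theorem stmt_3 (τstar c : ℝ) (hτ0 : 0 ≤ τstar)
    (hτmax : ∀ τ : ℝ, 0 ≤ τ → τ ^ 2 * ρ τ ≤ τstar ^ 2 * ρ τstar)
    (hc0 : 0 < c) (hc : c < τstar)
    (δstar : ℝ → ℝ)
    (hδstar : ∀ y, δstar y = Real.exp (2 * c * y) / (Real.exp (2 * c * y) + 1)) :
    (⨆ τ : Set.Icc (-c) c, R δstar τ) = c ^ 2 * ρ c :=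
  stmt_3_general τstar c hτmax hc0 hc δstar hδstar
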